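/- arXiv:2602.14600 — 9 statements merged into one kernel-verified Lean document; each statement's English description precedes it below -/
import Mathlib

section
/- Let R be a ring, let a ∈ √Δ(R) and b ∈ U(R) with ab = ba. Then ab ∈ √Δ(R). -/
/-- Δ(R) = {x : 1 - x*u is a unit for every unit u}. -/
def Delta (R : Type*) [Ring R] : Set R :=
  {x | ∀ u : R, IsUnit u → IsUnit (1 - x * u)}

/-- √Δ(R) = {x : x^n ∈ Δ(R) for some n ≥ 1}. -/
def sqrtDelta (R : Type*) [Ring R] : Set R :=
  {x | ∃ n : ℕ, 1 ≤ n ∧ x ^ n ∈ Delta R}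

theorem Delta.mul_isUnit {R : Type*} [Ring R] {x v : R} (hx : x ∈ Delta R) (hv : IsUnit v) :
    x * v ∈ Delta R := fun u hu => by
  rw [mul_assoc]
  exact hx _ (hv.mul hu)

theorem stmt_0 {R : Type*} [Ring R] (a b : R) (ha : a ∈ sqrtDelta R)
    (hb : IsUnit b) (hcomm : a * b = b * a) : a * b ∈ sqrtDelta R := by
  obtain ⟨n, hn, hΔ⟩ := ha
  refine ⟨n, hn, ?_⟩
  rw [Commute.mul_pow hcomm n]
  exact Delta.mul_isUnit hΔ (hb.pow n)
end

section
/- Let R be a ring. If a ∈ √Δ(R), then 1 - a is a unit of R. -/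
theorem isUnit_one_sub_of_isUnit_one_sub_pow {R : Type*} [Ring R] {a : R} {n : ℕ}
    (h : IsUnit (1 - a ^ n)) : IsUnit (1 - a) := by
  have hcomm : Commute (1 - a) (∑ i ∈ Finset.range n, a ^ i) :=
    (mul_neg_geom_sum a n).trans (geom_sum_mul_neg a n).symm
  rw [← mul_neg_geom_sum] at h
  exact (hcomm.isUnit_mul_iff.mp h).1

theorem isUnit_one_sub_of_mem_Delta {R : Type*} [Ring R] {x : R} (hx : x ∈ Delta R) :
    IsUnit (1 - x) := by
  simpa using hx 1 isUnit_one

theorem stmt_1 {R : Type*} [Ring R] (a : R) (ha : a ∈ sqrtDelta R) :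
    IsUnit (1 - a) := by
  obtain ⟨n, -, hn⟩ := ha
  exact isUnit_one_sub_of_isUnit_one_sub_pow (isUnit_one_sub_of_mem_Delta hn)
end

section
/- For any ring R, √Δ(R)·Δ(R) ⊆ Δ(R); i.e., if a ∈ √Δ(R) and b ∈ Δ(R), then ab ∈ Δ(R). -/
/-! If `a ^ n ∈ Δ(R)` then `1 - a ^ n` is a unit, hence so is its factor `1 - a`. For a unit `u`,
`b * u ∈ Δ(R)`, and `1 - (b * u) * a = (1 - b * u) + (b * u) * (1 - a)` is a unit plus an element of
`Δ(R)`, hence a unit; by Jacobson's lemma so is `1 - a * b * u`. -/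

-- Jacobson's lemma: the case `r = 1` of `spectrum.unit_mem_mul_comm` over `ℤ`.
theorem isUnit_one_sub_mul_comm {R : Type*} [Ring R] {x y : R} :
    IsUnit (1 - x * y) ↔ IsUnit (1 - y * x) := by
  simpa [spectrum.mem_iff] using
    (spectrum.unit_mem_mul_comm (R := ℤ) (a := x) (b := y) (r := 1)).not

namespace Delta

variable {R : Type*} [Ring R] {x v : R}

theorem isUnit_one_sub (hx : x ∈ Delta R) : IsUnit (1 - x) := by
  simpa using hx 1 isUnit_one

theorem mul_isUnit_s4 (hx : x ∈ Delta R) (hv : IsUnit v) : x * v ∈ Delta R := fun u hu => by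
  simpa only [mul_assoc] using hx (v * u) (hv.mul hu)

theorem isUnit_add (hx : x ∈ Delta R) (hv : IsUnit v) : IsUnit (v + x) := by
  obtain ⟨v, rfl⟩ := hv
  have h := hx (-↑v⁻¹) (Units.isUnit (-v⁻¹))
  have hprod : (1 - x * -↑v⁻¹) * v = v + x := by
    rw [mul_neg, sub_neg_eq_add, add_mul, one_mul, mul_assoc, Units.inv_mul, mul_one]
  exact hprod ▸ h.mul v.isUnit

theorem isUnit_one_sub_mul (hx : x ∈ Delta R) {a : R} (ha : IsUnit (1 - a)) :
    IsUnit (1 - x * a) := by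
  have hsplit : 1 - x * a = (1 - x) + x * (1 - a) := by noncomm_ring
  rw [hsplit]
  exact isUnit_add (mul_isUnit_s4 hx ha) (isUnit_one_sub hx)

end Delta

theorem stmt_4 {R : Type*} [Ring R] (a b : R) (ha : a ∈ sqrtDelta R)
    (hb : b ∈ Delta R) : a * b ∈ Delta R := by
  obtain ⟨n, -, han⟩ := ha
  have h1a : IsUnit (1 - a) := isUnit_one_sub_of_isUnit_one_sub_pow (Delta.isUnit_one_sub han)
  intro u hu
  rw [mul_assoc, isUnit_one_sub_mul_comm]
  exact Delta.isUnit_one_sub_mul (Delta.mul_isUnit_s4 hb hu) h1a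
end

section
/- For any ring R, √Δ(R) + Δ(R) ⊆ √Δ(R); i.e., if a ∈ √Δ(R) and b ∈ Δ(R), then a + b ∈ √Δ(R). -/
namespace DeltaAux

variable {R : Type*} [Ring R]

/-- Jacobson's lemma: 1 - ab unit implies 1 - ba unit. -/
lemma swap {a b : R} (h : IsUnit (1 - a * b)) : IsUnit (1 - b * a) := by
  obtain ⟨v, hv1, hv2⟩ := isUnit_iff_exists.mp h
  refine isUnit_iff_exists.mpr ⟨1 + b * v * a, ?_, ?_⟩
  · have key : (1 - b * a) * (1 + b * v * a) = 1 + b * ((1 - a * b) * v - 1) * a := by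
      noncomm_ring
    rw [hv1] at key
    simpa using key
  · have key : (1 + b * v * a) * (1 - b * a) = 1 + b * (v * (1 - a * b) - 1) * a := by
      noncomm_ring
    rw [hv2] at key
    simpa using key

lemma mul_unit_mem {x u : R} (hx : x ∈ Delta R) (hu : IsUnit u) : x * u ∈ Delta R := by
  intro w hw
  rw [mul_assoc]
  exact hx _ (hu.mul hw)

lemma unit_mul_mem {x u : R} (hu : IsUnit u) (hx : x ∈ Delta R) : u * x ∈ Delta R := by
  intro w hw
  have h1 : IsUnit (1 - x * (w * u)) := hx _ (hw.mul hu)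
  have h2 := swap h1
  rw [mul_assoc] at h2
  exact swap h2

lemma one_add_unit {x : R} (hx : x ∈ Delta R) : IsUnit (1 + x) := by
  have := hx (-1) (isUnit_one.neg)
  rwa [mul_neg_one, sub_neg_eq_add] at this

/-- The key atom: if x ∈ Δ and 1 + c is a unit, then 1 - x*c is a unit. -/
lemma atom {x c : R} (hx : x ∈ Delta R) (hc : IsUnit (1 + c)) : IsUnit (1 - x * c) := by
  have hv : IsUnit (1 + x) := one_add_unit hx
  obtain ⟨p, hp1, hp2⟩ := isUnit_iff_exists.mp hv
  have hpu : IsUnit p := isUnit_iff_exists.mpr ⟨1 + x, hp2, hp1⟩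
  have hpx : p * x ∈ Delta R := unit_mul_mem hpu hx
  have h2 : IsUnit (1 - p * x * (1 + c)) := hpx _ hc
  have key : (1 + x) * (1 - p * x * (1 + c)) = 1 - x * c + (1 - (1 + x) * p) * (x * (1 + c)) := by
    noncomm_ring
  rw [hp1] at key
  simp only [sub_self, zero_mul, add_zero] at key
  have := hv.mul h2
  rwa [key] at this

lemma mul_right_mem {a x : R} (ha : IsUnit (1 + a)) (hx : x ∈ Delta R) :
    a * x ∈ Delta R := by
  intro u hu
  rw [mul_assoc]
  exact swap (atom (mul_unit_mem hx hu) ha)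

lemma mul_left_mem {a x : R} (ha : IsUnit (1 + a)) (hx : x ∈ Delta R) :
    x * a ∈ Delta R := by
  intro u hu
  have h1 : IsUnit (1 - u * x * a) := atom (unit_mul_mem hu hx) ha
  rw [mul_assoc] at h1
  exact swap h1

lemma mul_mem {x y : R} (hx : x ∈ Delta R) (hy : y ∈ Delta R) : x * y ∈ Delta R :=
  mul_right_mem (one_add_unit hx) hy

lemma add_mem {x y : R} (hx : x ∈ Delta R) (hy : y ∈ Delta R) : x + y ∈ Delta R := by
  intro u hu
  have hw : IsUnit (1 - x * u) := hx u hu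
  obtain ⟨p, hp1, hp2⟩ := isUnit_iff_exists.mp hw
  have hpu : IsUnit p := isUnit_iff_exists.mpr ⟨1 - x * u, hp2, hp1⟩
  have hpy : p * y ∈ Delta R := unit_mul_mem hpu hy
  have h2 : IsUnit (1 - p * y * u) := hpy u hu
  have key : (1 - x * u) * (1 - p * y * u) =
      1 - (x + y) * u + (1 - (1 - x * u) * p) * (y * u) := by
    noncomm_ring
  rw [hp1] at key
  simp only [sub_self, zero_mul, add_zero] at key
  have := hw.mul h2
  rwa [key] at this

lemma pow_mem {x : R} (hx : x ∈ Delta R) : ∀ k : ℕ, 1 ≤ k → x ^ k ∈ Delta R := by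
  intro k hk
  induction k with
  | zero => omega
  | succ m ih =>
    rcases Nat.eq_or_lt_of_le hk with h | h
    · simpa [← h] using hx
    · have hm : 1 ≤ m := by omega
      rw [pow_succ]
      exact mul_mem (ih hm) hx

/-- If 1 - x^m is a unit (m ≥ 1), then 1 - x is a unit. -/
lemma one_sub_of_pow {x : R} {m : ℕ} (h : IsUnit (1 - x ^ m)) : IsUnit (1 - x) := by
  set s : R := ∑ i ∈ Finset.range m, x ^ i with hs
  have h1 : (1 - x) * s = 1 - x ^ m := by
    have h' : (x - 1) * s = x ^ m - 1 := by rw [hs]; exact mul_geom_sum x m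
    calc (1 - x) * s = -((x - 1) * s) := by noncomm_ring
      _ = -(x ^ m - 1) := by rw [h']
      _ = 1 - x ^ m := by noncomm_ring
  have h2 : s * (1 - x) = 1 - x ^ m := by
    have h' : s * (x - 1) = x ^ m - 1 := by rw [hs]; exact geom_sum_mul x m
    calc s * (1 - x) = -(s * (x - 1)) := by noncomm_ring
      _ = -(x ^ m - 1) := by rw [h']
      _ = 1 - x ^ m := by noncomm_ring
  obtain ⟨q, hq1, hq2⟩ := isUnit_iff_exists.mp h
  refine isUnit_iff_exists.mpr ⟨s * q, ?_, ?_⟩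
  · rw [← mul_assoc, h1, hq1]
  · -- (s*q)*(1-x) = 1 : use that q commutes with 1 - x^m hence with s-related products
    have hcomm : (1 - x) * q = q * (1 - x) := by
      have c1 : (1 - x ^ m) * (1 - x) = (1 - x) * (1 - x ^ m) := by
        have hxm : Commute (x ^ m) (1 - x) :=
          (Commute.one_right (x ^ m)).sub_right ((Commute.refl x).pow_left m)
        exact ((Commute.one_left (1 - x)).sub_left hxm).eq
      calc (1 - x) * q = q * ((1 - x ^ m) * ((1 - x) * q)) := by rw [← mul_assoc, hq2, one_mul]
        _ = q * ((1 - x ^ m) * (1 - x) * q) := by rw [mul_assoc (1 - x ^ m)]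
        _ = q * ((1 - x) * (1 - x ^ m) * q) := by rw [c1]
        _ = q * ((1 - x) * ((1 - x ^ m) * q)) := by rw [mul_assoc]
        _ = q * (1 - x) := by rw [hq1, mul_one]
    rw [mul_assoc, ← hcomm, ← mul_assoc, h2, hq1]

lemma one_add_unit_of_sqrt {a : R} (ha : a ∈ sqrtDelta R) : IsUnit (1 + a) := by
  obtain ⟨n, hn, hΔ⟩ := ha
  have h2n : a ^ (2 * n) ∈ Delta R := by
    rw [two_mul, pow_add]
    exact mul_mem hΔ hΔ
  have hu : IsUnit (1 - a ^ (2 * n)) := by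
    have := h2n 1 isUnit_one
    rwa [mul_one] at this
  have hneg : IsUnit (1 - (-a) ^ (2 * n)) := by
    rwa [Even.neg_pow ⟨n, by ring⟩]
  have := one_sub_of_pow hneg
  rwa [sub_neg_eq_add] at this

end DeltaAux

theorem stmt_5 {R : Type*} [Ring R] (a b : R) (ha : a ∈ sqrtDelta R)
    (hb : b ∈ Delta R) : a + b ∈ sqrtDelta R := by
  obtain ⟨n, hn, hΔ⟩ := ha
  have hone_add_a : IsUnit (1 + a) := DeltaAux.one_add_unit_of_sqrt ⟨n, hn, hΔ⟩
  -- for every k ≥ 1, 1 + a^k is a unit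
  have hpow_unit : ∀ k : ℕ, 1 ≤ k → IsUnit (1 + a ^ k) := by
    intro k hk
    apply DeltaAux.one_add_unit_of_sqrt
    refine ⟨n, hn, ?_⟩
    rw [← pow_mul, mul_comm, pow_mul]
    exact DeltaAux.pow_mem hΔ k hk
  have key : ∀ k : ℕ, 1 ≤ k → (a + b) ^ k - a ^ k ∈ Delta R := by
    intro k hk
    induction k with
    | zero => omega
    | succ m ih =>
      rcases Nat.eq_or_lt_of_le hk with h | h
      · simpa [← h] using hb
      · have hm : 1 ≤ m := by omega
        have hd := ih hm
        have heq : (a + b) ^ (m + 1) - a ^ (m + 1) =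
            (((a + b) ^ m - a ^ m) * a + ((a + b) ^ m - a ^ m) * b) + a ^ m * b := by
          rw [pow_succ, pow_succ]
          noncomm_ring
        rw [heq]
        apply DeltaAux.add_mem
        · exact DeltaAux.add_mem (DeltaAux.mul_left_mem hone_add_a hd)
            (DeltaAux.mul_mem hd hb)
        · exact DeltaAux.mul_right_mem (hpow_unit m hm) hb
  refine ⟨n, hn, ?_⟩
  have := DeltaAux.add_mem (key n hn) hΔ
  simpa using this
end

section
/- For any ring R, √Δ(R) ∩ Id(R) = {0}, i.e., the only idempotent lying in √Δ(R) is 0. -/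
theorem IsIdempotentElem.eq_zero_of_isUnit_one_sub {R : Type*} [Ring R] {e : R}
    (he : IsIdempotentElem e) (hu : IsUnit (1 - e)) : e = 0 :=
  sub_eq_self.mp ((IsIdempotentElem.iff_eq_one_of_isUnit hu).mp he.one_sub)

theorem IsIdempotentElem.mem_Delta_of_mem_sqrtDelta {R : Type*} [Ring R] {e : R}
    (he : IsIdempotentElem e) (hd : e ∈ sqrtDelta R) : e ∈ Delta R := by
  obtain ⟨n, hn, hΔ⟩ := hd
  rwa [he.pow_eq (by omega)] at hΔ

theorem stmt_8 {R : Type*} [Ring R] (e : R) (he : e * e = e)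
    (hd : e ∈ sqrtDelta R) : e = 0 := by
  have he : IsIdempotentElem e := he
  exact he.eq_zero_of_isUnit_one_sub
    (isUnit_one_sub_of_mem_Delta (he.mem_Delta_of_mem_sqrtDelta hd))
end

section
/- Every U√Δ-ring is Dedekind-finite: if R is a U√Δ-ring and a, b ∈ R satisfy ab = 1, then ba = 1. -/
/-- R is a U√Δ-ring if every non-unit is a product of a unit and an element of √Δ(R). -/
def IsUSqrtDeltaRing (R : Type*) [Ring R] : Prop :=
  ∀ a : R, ¬ IsUnit a → ∃ u b : R, IsUnit u ∧ b ∈ sqrtDelta R ∧ a = u * b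

/-- Jacobson's lemma: `1 - a*b` a unit implies `1 - b*a` a unit. -/
lemma isUnit_one_sub_swap {R : Type*} [Ring R] {a b : R}
    (h : IsUnit (1 - a * b)) : IsUnit (1 - b * a) := by
  obtain ⟨u, hu⟩ := h
  have h1 : (1 - a * b) * ↑u⁻¹ = 1 := by rw [← hu]; exact u.mul_inv
  have h2 : ↑u⁻¹ * (1 - a * b) = 1 := by rw [← hu]; exact u.inv_mul
  refine isUnit_iff_exists.2 ⟨1 + b * ↑u⁻¹ * a, ?_, ?_⟩
  · have e : (1 - b * a) * (1 + b * ↑u⁻¹ * a)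
        = 1 - b * a + b * ((1 - a * b) * ↑u⁻¹) * a := by noncomm_ring
    rw [e, h1]; noncomm_ring
  · have e : (1 + b * ↑u⁻¹ * a) * (1 - b * a)
        = 1 - b * a + b * (↑u⁻¹ * (1 - a * b)) * a := by noncomm_ring
    rw [e, h2]; noncomm_ring

lemma Delta.mul_unit {R : Type*} [Ring R] {x u : R}
    (hx : x ∈ Delta R) (hu : IsUnit u) : x * u ∈ Delta R := by
  intro v hv
  have := hx (u * v) (hu.mul hv)
  rwa [← mul_assoc] at this

/-- `1 - x*s` is a unit for `x, s ∈ Δ`. -/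
lemma Delta.one_sub_mul {R : Type*} [Ring R] {x s : R}
    (hx : x ∈ Delta R) (hs : s ∈ Delta R) : IsUnit (1 - x * s) := by
  have hW : IsUnit (1 - x) := by simpa using hx 1 isUnit_one
  have hv : IsUnit (1 - s) := by simpa using hs 1 isUnit_one
  obtain ⟨W, hWe⟩ := hW
  -- inner factor is a unit
  have hinner : IsUnit (1 + ↑W⁻¹ * (x * (1 - s))) := by
    have hu' : IsUnit (-((1 - s) * ↑W⁻¹)) := ((hv.mul (W⁻¹).isUnit).neg)
    have h1 : IsUnit (1 - x * (-((1 - s) * ↑W⁻¹))) := hx _ hu'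
    have h2 : IsUnit (1 - (-(x * (1 - s))) * ↑W⁻¹) := by
      have e : 1 - (-(x * (1 - s))) * ↑W⁻¹ = 1 - x * (-((1 - s) * ↑W⁻¹)) := by
        noncomm_ring
      rw [e]; exact h1
    have h3 := isUnit_one_sub_swap h2
    have e : 1 - ↑W⁻¹ * -(x * (1 - s)) = 1 + ↑W⁻¹ * (x * (1 - s)) := by noncomm_ring
    rwa [e] at h3
  have key : 1 - x * s = ↑W * (1 + ↑W⁻¹ * (x * (1 - s))) := by
    have hWW : (↑W : R) * ↑W⁻¹ = 1 := W.mul_inv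
    have e : (↑W : R) * (1 + ↑W⁻¹ * (x * (1 - s)))
        = ↑W + (↑W * ↑W⁻¹) * (x * (1 - s)) := by noncomm_ring
    rw [e, hWW, hWe]; noncomm_ring
  rw [key]
  exact (W.isUnit).mul hinner

lemma Delta.mul_mem {R : Type*} [Ring R] {x y : R}
    (hx : x ∈ Delta R) (hy : y ∈ Delta R) : x * y ∈ Delta R := by
  intro u hu
  rw [mul_assoc]
  exact Delta.one_sub_mul hx (Delta.mul_unit hy hu)

lemma pow_mul_pow_eq_one' {R : Type*} [Ring R] {x y : R} (h : x * y = 1) :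
    ∀ n : ℕ, x ^ n * y ^ n = 1 := by
  intro n
  induction n with
  | zero => simp
  | succ k ih =>
    have : x ^ (k + 1) * y ^ (k + 1) = x * (x ^ k * y ^ k) * y := by
      rw [pow_succ' x, pow_succ y]; noncomm_ring
    rw [this, ih, mul_one, h]

theorem stmt_13 {R : Type*} [Ring R] (hR : IsUSqrtDeltaRing R) (a b : R)
    (h : a * b = 1) : b * a = 1 := by
  -- if 0 = 1 the ring is trivial and we are done; record this escape hatch
  have triv : IsUnit (0 : R) → b * a = 1 := by
    intro h0
    have : (0 : R) = 1 := isUnit_zero_iff.1 h0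
    have : Subsingleton R := subsingleton_of_zero_eq_one this
    exact Subsingleton.elim _ _
  -- a Δ-element that is a unit forces the trivial ring
  have delta_unit : ∀ z : R, z ∈ Delta R → IsUnit z → IsUnit (0 : R) := by
    intro z hz hzu
    obtain ⟨Z, hZ⟩ := hzu
    have := hz (↑Z⁻¹) Z⁻¹.isUnit
    rwa [← hZ, Z.mul_inv, sub_self] at this
  by_cases hb : IsUnit b
  · obtain ⟨β, hβ⟩ := hb
    have hbinv : b * ↑β⁻¹ = 1 := by rw [← hβ]; exact β.mul_inv
    calc b * a = b * a * (b * ↑β⁻¹) := by rw [hbinv, mul_one]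
    _ = b * (a * b) * ↑β⁻¹ := by noncomm_ring
    _ = 1 := by rw [h, mul_one]; exact hbinv
  · obtain ⟨u, c, hu, hc, hbc⟩ := hR b hb
    obtain ⟨n, -, hcn⟩ := hc
    have hdc : (a * u) * c = 1 := by rw [mul_assoc, ← hbc, h]
    set z : R := c ^ n with hzdef
    set w : R := (a * u) ^ n with hwdef
    have hwz : w * z = 1 := pow_mul_pow_eq_one' hdc n
    have hz : z ∈ Delta R := hcn
    by_cases hwun : IsUnit w
    · -- then z is a unit, contradiction via delta_unit
      obtain ⟨W, hW⟩ := hwun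
      have hzu : IsUnit z := by
        have hz' : z = (↑W⁻¹ : R) := by
          have := congrArg (fun t => (↑W⁻¹ : R) * t) hwz
          simpa [← hW, mul_one, ← mul_assoc, W.inv_mul] using this
        rw [hz']; exact W⁻¹.isUnit
      exact triv (delta_unit z hz hzu)
    · obtain ⟨u₃, c₃, hu₃, hc₃, hw3⟩ := hR w hwun
      obtain ⟨k, -, hck⟩ := hc₃
      set q : R := z * u₃ with hqdef
      have hq : q ∈ Delta R := Delta.mul_unit hz hu₃
      obtain ⟨U₃, hU₃⟩ := hu₃
      have hc3q : c₃ * q = 1 := by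
        have h5 : u₃ * (c₃ * q) = u₃ * 1 := by
          rw [mul_one, hqdef, ← mul_assoc, ← mul_assoc, ← hw3, hwz, one_mul]
        have := congrArg (fun t => (↑U₃⁻¹ : R) * t) h5
        simpa [← hU₃, ← mul_assoc, U₃.inv_mul] using this
      -- descend powers of c₃ inside Δ down to 1 ∈ Δ
      have descend : ∀ i : ℕ, c₃ ^ i ∈ Delta R → (1 : R) ∈ Delta R := by
        intro i
        induction i with
        | zero => intro hi; simpa using hi
        | succ j ih =>
          intro hi
          apply ih
          have : c₃ ^ (j + 1) * q = c₃ ^ j := by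
            rw [pow_succ, mul_assoc, hc3q, mul_one]
          rw [← this]
          exact Delta.mul_mem hi hq
      have h1Δ : (1 : R) ∈ Delta R := descend k hck
      have := h1Δ 1 isUnit_one
      rw [mul_one, sub_self] at this
      exact triv this
end

section
/- Let R be a ring and I an ideal of R. If R is a U√Δ-ring, then R/I is a U√Δ-ring. Conversely, if I ⊆ J(R) and R/I is a U√Δ-ring, then R is a U√Δ-ring. -/
section Helpers

variable {R : Type*} [Ring R]

/-- If `a` has a left inverse and a right inverse, it is a unit. -/
lemma USD.isUnit_of_left_right {a b c : R} (h1 : b * a = 1) (h2 : a * c = 1) : IsUnit a := by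
  have hbc : b = c := by
    calc b = b * (a * c) := by rw [h2, mul_one]
    _ = (b * a) * c := by rw [mul_assoc]
    _ = c := by rw [h1, one_mul]
  exact ⟨⟨a, c, h2, hbc ▸ h1⟩, rfl⟩

/-- Jacobson radical lemma (noncommutative): `x ∈ J(R)` implies `1 - y*x` is a unit. -/
lemma USD.jac_unit {x : R} (hx : x ∈ Ideal.jacobson (⊥ : Ideal R)) (y : R) :
    IsUnit (1 - y * x) := by
  have main : ∀ y : R, ∃ t : R, t * (1 - y * x) = 1 := by
    intro y
    by_contra h
    push_neg at h
    have hne : Ideal.span {1 - y * x} ≠ ⊤ := by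
      intro htop
      have h1 : (1 : R) ∈ Ideal.span {1 - y * x} := by rw [htop]; trivial
      obtain ⟨t, ht⟩ := Submodule.mem_span_singleton.mp h1
      exact h t (by simpa [smul_eq_mul] using ht)
    obtain ⟨M, hM, hle⟩ := Ideal.exists_le_maximal _ hne
    have hxM : x ∈ M := by
      have hJM : Ideal.jacobson (⊥ : Ideal R) ≤ M := sInf_le ⟨bot_le, hM⟩
      exact hJM hx
    have hzM : 1 - y * x ∈ M := hle (Ideal.subset_span rfl)
    have hyx : y * x ∈ M := by
      simpa [smul_eq_mul] using M.smul_mem y hxM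
    have h1M : (1 : R) ∈ M := by
      have := M.add_mem hzM hyx
      simpa using this
    exact hM.ne_top ((Ideal.eq_top_iff_one M).mpr h1M)
  obtain ⟨t, ht⟩ := main y
  obtain ⟨s, hs⟩ := main (-(t * y))
  have hteq : 1 - -(t * y) * x = t := by
    have h1 : t - t * (y * x) = 1 := by rw [← ht]; noncomm_ring
    have h2 : 1 - -(t * y) * x = 1 + t * (y * x) := by noncomm_ring
    rw [h2, ← h1]; noncomm_ring
  rw [hteq] at hs
  have hz : (1 - y * x) = s := by
    calc (1 - y * x) = (s * t) * (1 - y * x) := by rw [hs, one_mul]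
    _ = s * (t * (1 - y * x)) := by rw [mul_assoc]
    _ = s := by rw [ht, mul_one]
  exact USD.isUnit_of_left_right ht (show (1 - y * x) * t = 1 by rw [hz]; exact hs)

variable (I : TwoSidedIdeal R)

local notation "π" => RingCon.mk' I.ringCon

lemma USD.surj : Function.Surjective (π) :=
  fun q => Quotient.inductionOn' q (fun a => ⟨a, rfl⟩)

lemma USD.mem0 (x : R) : (π) x = 0 ↔ x ∈ I := by
  have : ((x : I.ringCon.Quotient) = (0 : R)) ↔ I.ringCon x 0 := RingCon.eq _
  simpa [TwoSidedIdeal.mem_iff] using this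

lemma USD.sub_mem_of_eq {x y : R} (h : (π) x = (π) y) : x - y ∈ I := by
  rw [← TwoSidedIdeal.rel_iff]
  exact (RingCon.eq _).mp h

/-- Units lift along the quotient map when the kernel is inside the Jacobson radical. -/
lemma USD.lift_isUnit (hIJ : ∀ x ∈ I, x ∈ Ideal.jacobson (⊥ : Ideal R)) {v : R}
    (hv : IsUnit ((π) v)) : IsUnit v := by
  obtain ⟨u, hu⟩ := hv
  obtain ⟨w, hw⟩ := USD.surj I (↑u⁻¹)
  have h1 : (π) (v * w) = 1 := by
    rw [map_mul, ← hu, hw, Units.mul_inv]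
  have h2 : (π) (w * v) = 1 := by
    rw [map_mul, ← hu, hw, Units.inv_mul]
  have key : ∀ z : R, (π) z = 1 → IsUnit z := by
    intro z hz
    have hmem : (1 : R) - z ∈ I := by
      apply USD.sub_mem_of_eq I
      rw [map_one, hz]
    have := USD.jac_unit (hIJ _ hmem) 1
    simpa using this
  have hvw := key _ h1
  have hwv := key _ h2
  obtain ⟨A, hA⟩ := hvw
  obtain ⟨B, hB⟩ := hwv
  refine USD.isUnit_of_left_right (b := ↑B⁻¹ * w) (c := w * ↑A⁻¹) ?_ ?_
  · rw [mul_assoc, ← hB, Units.inv_mul]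
  · rw [← mul_assoc, ← hA, Units.mul_inv]

/-- If the kernel sits inside the Jacobson radical, quotients of U√Δ rings are U√Δ. -/
lemma USD.quot (hR : IsUSqrtDeltaRing R)
    (hIJ : ∀ x ∈ I, x ∈ Ideal.jacobson (⊥ : Ideal R)) :
    IsUSqrtDeltaRing I.ringCon.Quotient := by
  intro abar habar
  obtain ⟨a, rfl⟩ := USD.surj I abar
  have ha : ¬ IsUnit a := fun h => habar (h.map (π))
  obtain ⟨u, b, hu, ⟨n, hn1, hnD⟩, heq⟩ := hR a ha
  refine ⟨(π) u, (π) b, hu.map (π), ⟨n, hn1, ?_⟩, by rw [heq, map_mul]⟩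
  intro vbar hvbar
  obtain ⟨v, rfl⟩ := USD.surj I vbar
  have hv : IsUnit v := USD.lift_isUnit I hIJ hvbar
  have : IsUnit ((π) (1 - b ^ n * v)) := (hnD v hv).map (π)
  simpa [map_sub, map_mul, map_pow] using this

/-- In a U√Δ ring, every proper two-sided ideal is contained in the Jacobson radical. -/
lemma USD.proper_le_jac (hR : IsUSqrtDeltaRing R) (hproper : (1 : R) ∉ I) :
    ∀ x ∈ I, x ∈ Ideal.jacobson (⊥ : Ideal R) := by
  have key : ∀ i ∈ I, IsUnit (1 + i) := by
    intro i hi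
    by_contra hni
    obtain ⟨u, e, hu, ⟨n, hn1, hnD⟩, heq⟩ := hR _ hni
    obtain ⟨U, hU⟩ := hu
    have he : e = ↑U⁻¹ + ↑U⁻¹ * i := by
      have : (↑U⁻¹ : R) * (1 + i) = e := by
        rw [heq, ← hU, ← mul_assoc, Units.inv_mul, one_mul]
      rw [← this]; noncomm_ring
    have hcong : (π) (e ^ n) = (π) ((↑U⁻¹ : R) ^ n) := by
      rw [map_pow, map_pow]
      congr 1
      rw [he, map_add, map_mul, (USD.mem0 I i).mpr hi, mul_zero, add_zero]
    have hmem : e ^ n - (↑U⁻¹ : R) ^ n ∈ I := USD.sub_mem_of_eq I hcong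
    have hunit : IsUnit (1 - e ^ n * ↑(U ^ n)) := hnD _ (U ^ n).isUnit
    have hin : 1 - e ^ n * ↑(U ^ n) ∈ I := by
      have hform : 1 - e ^ n * ↑(U ^ n) = (-(e ^ n - (↑U⁻¹ : R) ^ n)) * ↑(U ^ n) := by
        have hcancel : ((↑U⁻¹ : R) ^ n) * ↑(U ^ n) = 1 := by
          rw [← Units.val_pow_eq_pow_val, ← Units.val_mul, inv_pow, inv_mul_cancel]
          simp
        rw [neg_sub, sub_mul, hcancel]
      rw [hform]
      exact I.mul_mem_right _ _ (I.neg_mem hmem)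
    obtain ⟨V, hV⟩ := hunit
    apply hproper
    have : (1 : R) = ↑V⁻¹ * (1 - e ^ n * ↑(U ^ n)) := by rw [← hV, Units.inv_mul]
    rw [this]
    exact I.mul_mem_left _ _ hin
  intro x hx
  have hjac : Ideal.jacobson (⊥ : Ideal R) = sInf {J : Ideal R | ⊥ ≤ J ∧ J.IsMaximal} := rfl
  rw [hjac, Ideal.mem_sInf]
  rintro M ⟨-, hM⟩
  by_contra hxM
  have hlt : M < M ⊔ Ideal.span {x} := by
    refine lt_of_le_of_ne le_sup_left (fun h => hxM ?_)
    have : x ∈ M ⊔ Ideal.span {x} := Submodule.mem_sup_right (Ideal.subset_span rfl)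
    rwa [← h] at this
  have htop : M ⊔ Ideal.span {x} = ⊤ := (Ideal.isMaximal_def.mp hM).2 _ hlt
  have h1 : (1 : R) ∈ M ⊔ Ideal.span {x} := by rw [htop]; trivial
  obtain ⟨m, hm, z, hz, hsum⟩ := Submodule.mem_sup.mp h1
  obtain ⟨t, ht⟩ := Submodule.mem_span_singleton.mp hz
  have hzI : z ∈ I := by
    rw [← ht]
    simpa [smul_eq_mul] using I.mul_mem_left t x hx
  have hmunit : IsUnit m := by
    have : m = 1 + (-z) := by rw [← hsum]; abel
    rw [this]
    exact key _ (I.neg_mem hzI)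
  obtain ⟨W, hW⟩ := hmunit
  have h1M : (1 : R) ∈ M := by
    have : (1 : R) = ↑W⁻¹ * m := by rw [← hW, Units.inv_mul]
    rw [this]
    simpa [smul_eq_mul] using M.smul_mem (↑W⁻¹ : R) hm
  exact hM.ne_top ((Ideal.eq_top_iff_one M).mpr h1M)

end Helpers

theorem stmt_14 {R : Type*} [Ring R] (I : TwoSidedIdeal R) :
    (IsUSqrtDeltaRing R → IsUSqrtDeltaRing I.ringCon.Quotient) ∧
    (I.asIdeal ≤ Ideal.jacobson ⊥ → IsUSqrtDeltaRing I.ringCon.Quotient →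
      IsUSqrtDeltaRing R) := by
  constructor
  · intro hR
    by_cases htriv : (1 : R) ∈ I
    · intro a ha
      exfalso
      apply ha
      have h01 : (0 : I.ringCon.Quotient) = 1 := by
        have := (USD.mem0 I 1).mpr htriv
        rw [map_one] at this
        exact this.symm
      haveI : Subsingleton I.ringCon.Quotient := subsingleton_of_zero_eq_one h01
      exact isUnit_of_subsingleton a
    · exact USD.quot I hR (USD.proper_le_jac I hR htriv)
  · intro hIJ' hQ
    have hIJ : ∀ x ∈ I, x ∈ Ideal.jacobson (⊥ : Ideal R) := by
      intro x hx
      exact hIJ' (TwoSidedIdeal.mem_asIdeal.mpr hx)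
    intro a ha
    have hπa : ¬ IsUnit (RingCon.mk' I.ringCon a) := fun h => ha (USD.lift_isUnit I hIJ h)
    obtain ⟨ubar, bbar, hubar, hbbar, heq⟩ := hQ _ hπa
    obtain ⟨u, rfl⟩ := USD.surj I ubar
    have hu : IsUnit u := USD.lift_isUnit I hIJ hubar
    obtain ⟨U, hU⟩ := hu
    refine ⟨u, ↑U⁻¹ * a, by rw [← hU]; exact U.isUnit, ?_, ?_⟩
    · obtain ⟨n, hn1, hnD⟩ := hbbar
      have hπb : RingCon.mk' I.ringCon (↑U⁻¹ * a) = bbar := by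
        rw [map_mul, heq, ← mul_assoc]
        have : RingCon.mk' I.ringCon (↑U⁻¹ : R) * RingCon.mk' I.ringCon u = 1 := by
          rw [← map_mul, ← hU, Units.inv_mul, map_one]
        rw [this, one_mul]
      refine ⟨n, hn1, ?_⟩
      intro w hw
      apply USD.lift_isUnit I hIJ
      have : IsUnit (1 - bbar ^ n * (RingCon.mk' I.ringCon w)) := hnD _ (hw.map _)
      simpa [map_sub, map_one, map_mul, map_pow, hπb] using this
    · rw [← mul_assoc, ← hU, Units.mul_inv, one_mul]
end

section
/- Let R be a commutative ring. Then R is a U√Δ-ring if and only if R is a local ring. -/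
/-! In a commutative ring `√Δ(R) = Δ(R)`, because `1 - xu` divides `1 - xⁿuⁿ`. Hence a U√Δ-ring
has `1 - a` a unit for every non-unit `a = ub`, which is locality; conversely, in a local ring every
non-unit lies in the maximal ideal, which is contained in `Δ(R)`. -/

theorem Delta_subset_sqrtDelta (R : Type*) [Ring R] : Delta R ⊆ sqrtDelta R :=
  fun _ hx => ⟨1, le_rfl, by rwa [pow_one]⟩

theorem sqrtDelta_subset_Delta (R : Type*) [CommRing R] : sqrtDelta R ⊆ Delta R := by
  rintro x ⟨n, -, hxn⟩ u hu
  have hpow : IsUnit (1 - (x * u) ^ n) := by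
    rw [mul_pow]
    exact hxn _ (hu.pow n)
  exact isUnit_of_dvd_unit (one_sub_dvd_one_sub_pow _ n) hpow

theorem IsLocalRing.mem_Delta_of_not_isUnit {R : Type*} [CommRing R] [IsLocalRing R] {a : R}
    (ha : ¬IsUnit a) : a ∈ Delta R := fun u _ =>
  isUnit_one_sub_self_of_mem_nonunits _ <|
    (mem_maximalIdeal _).mp <| Ideal.mul_mem_right u _ <| (mem_maximalIdeal a).mpr ha

theorem IsLocalRing.isUSqrtDeltaRing {R : Type*} [CommRing R] [IsLocalRing R] :
    IsUSqrtDeltaRing R := fun a ha =>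
  ⟨1, a, isUnit_one, Delta_subset_sqrtDelta R (mem_Delta_of_not_isUnit ha), (one_mul a).symm⟩

theorem IsUSqrtDeltaRing.isLocalRing {R : Type*} [CommRing R] [Nontrivial R]
    (h : IsUSqrtDeltaRing R) : IsLocalRing R := by
  refine IsLocalRing.of_isUnit_or_isUnit_one_sub_self fun a => or_iff_not_imp_left.mpr fun ha => ?_
  obtain ⟨u, b, hu, hb, rfl⟩ := h a ha
  rw [mul_comm]
  exact sqrtDelta_subset_Delta R hb u hu

theorem stmt_15 {R : Type*} [CommRing R] [Nontrivial R] :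
    IsUSqrtDeltaRing R ↔ IsLocalRing R :=
  ⟨IsUSqrtDeltaRing.isLocalRing, fun _ => IsLocalRing.isUSqrtDeltaRing⟩
end

section
/- For any ring R, the polynomial ring R[x] is not a U√Δ-ring. -/
open Polynomial in
lemma not_isUnit_one_sub_X_pow {R : Type*} [Ring R] [Nontrivial R] {n : ℕ} (hn : 1 ≤ n) :
    ¬ IsUnit (1 - (X : R[X]) ^ n) := by
  rintro ⟨v, hv⟩
  set p : R[X] := ((v⁻¹ : (R[X])ˣ) : R[X]) with hp
  have hmul : (1 - (X : R[X]) ^ n) * p = 1 := by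
    rw [hp, ← hv]; exact v.mul_inv
  have hkey : p = 1 + X ^ n * p := by
    have : p - X ^ n * p = 1 := by
      have := hmul
      rwa [sub_mul, one_mul] at this
    rw [sub_eq_iff_eq_add] at this
    exact this
  have hc : ∀ k : ℕ, p.coeff (k * n) = 1 := by
    intro k
    induction k with
    | zero =>
      have := congrArg (fun q => Polynomial.coeff q 0) hkey
      simp only [Polynomial.coeff_add, Polynomial.coeff_one, Polynomial.coeff_X_pow_mul'] at this
      simpa [Nat.not_le.mpr (lt_of_lt_of_le zero_lt_one hn)] using this
    | succ k ih =>
      have := congrArg (fun q => Polynomial.coeff q ((k + 1) * n)) hkey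
      have h1 : ((k + 1) * n ≠ 0) := by positivity
      have h2 : n ≤ (k + 1) * n := Nat.le_mul_of_pos_left n (Nat.succ_pos k)
      simp only [Polynomial.coeff_add, Polynomial.coeff_one, Polynomial.coeff_X_pow_mul',
        if_pos h2, if_neg h1] at this
      have h3 : (k + 1) * n - n = k * n := by
        rw [Nat.succ_mul]; omega
      rw [this, h3, ih, zero_add]
  have hbig : p.coeff ((p.natDegree + 1) * n) = 0 := by
    apply Polynomial.coeff_eq_zero_of_natDegree_lt
    calc p.natDegree < p.natDegree + 1 := Nat.lt_succ_self _
      _ ≤ (p.natDegree + 1) * n := Nat.le_mul_of_pos_right _ hn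
  rw [hc] at hbig
  exact one_ne_zero hbig

lemma central_mul_pow {S : Type*} [Ring S] {x : S} (hx : ∀ s : S, x * s = s * x)
    (c : S) (n : ℕ) : (c * x) ^ n = x ^ n * c ^ n := by
  induction n with
  | zero => simp
  | succ m ih =>
    rw [pow_succ, pow_succ, pow_succ]
    calc (c * x) ^ m * (c * x) = x ^ m * c ^ m * (c * x) := by rw [ih]
      _ = x ^ m * (c ^ m * c * x) := by rw [mul_assoc, mul_assoc]
      _ = x ^ m * (x * (c ^ m * c)) := by rw [← hx]
      _ = x ^ m * x * (c ^ m * c) := by rw [mul_assoc]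

open Polynomial in
theorem stmt_16 {R : Type*} [Ring R] [Nontrivial R] :
    ¬ IsUSqrtDeltaRing (Polynomial R) := by
  intro h
  obtain ⟨u, b, hu, ⟨n, hn, hΔ⟩, hX⟩ := h X Polynomial.not_isUnit_X
  obtain ⟨uu, rfl⟩ := hu
  -- b = uu⁻¹ * X, X central
  have hb : b = ((uu⁻¹ : (R[X])ˣ) : R[X]) * X := by
    have := congrArg (fun q => ((uu⁻¹ : (R[X])ˣ) : R[X]) * q) hX
    simpa [← mul_assoc] using this.symm
  have hXc : ∀ q : R[X], X * q = q * X := fun q => Polynomial.X_mul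
  have hbn : b ^ n = X ^ n * ((uu⁻¹ : (R[X])ˣ) : R[X]) ^ n := by
    rw [hb]; exact central_mul_pow hXc _ n
  have hun : IsUnit ((uu : R[X]) ^ n) := (uu.isUnit).pow n
  have hthis := hΔ ((uu : R[X]) ^ n) hun
  have hcu : ((uu⁻¹ : (R[X])ˣ) : R[X]) ^ n * ((uu : R[X])) ^ n = 1 := by
    rw [← Units.val_pow_eq_pow_val, ← Units.val_pow_eq_pow_val, ← Units.val_mul, inv_pow, inv_mul_cancel, Units.val_one]
  rw [hbn, mul_assoc, hcu, mul_one] at hthis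
  exact not_isUnit_one_sub_X_pow hn hthis
end
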